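/- Let m : ℤ × ℤ → ℤ be an SL2-tiling over the integers and let n be a positive integer. Then the number of wild entries m(i,j) with 0 ≤ i < n and 0 ≤ j < n is at most 2(n+2)²/5. -/

import Mathlib

/-- An SL2-tiling over a commutative ring `R`. -/
def IsSL2Tiling {R : Type*} [CommRing R] (m : ℤ × ℤ → R) : Prop :=
  ∀ i j : ℤ, m (i, j) * m (i + 1, j + 1) - m (i, j + 1) * m (i + 1, j) = 1

/-- The determinant of the 3×3 block of `m` centred at `(i, j)`. -/
def nbhdDet {R : Type*} [CommRing R] (m : ℤ × ℤ → R) (i j : ℤ) : R :=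
  (Matrix.of fun u v : Fin 3 => m (i + ((u : ℕ) : ℤ) - 1, j + ((v : ℕ) : ℤ) - 1)).det

/-- The entry `m (i, j)` is wild if the surrounding 3×3 determinant is nonzero. -/
def IsWild {R : Type*} [CommRing R] (m : ℤ × ℤ → R) (i j : ℤ) : Prop :=
  nbhdDet m i j ≠ 0

/-!
Wild entries of an SL2-tiling are zeros, no two zeros are adjacent, and every wild zero `w` has a
nonzero diagonal neighbour `w + d`, its hole. Cut every cell into eight triangles. The wild cell
`w` gets a pentagon of twenty of them: its own cell, the half of each of its four neighbours facing
`w`, and the quarter of its hole facing `w`. Two cells of a unit square claim a common triangle only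
if they are equal, adjacent, or opposite with one the hole of the other, so pentagons of distinct
wild cells are disjoint. The pentagons of the wild cells of an `n × n` square lie in the
`(n + 2) × (n + 2)` square around it, whence `20 · #wild ≤ 8 (n + 2)²`.
-/

open Finset

def unitSteps : Finset (ℤ × ℤ) := {(1, 0), (-1, 0), (0, 1), (0, -1)}

def diagSteps : Finset (ℤ × ℤ) := {(1, 1), (1, -1), (-1, 1), (-1, -1)}

lemma nbhdDet_eq {R : Type*} [CommRing R] (m : ℤ × ℤ → R) (i j : ℤ) :
    nbhdDet m i j =
      m (i-1, j-1) * (m (i, j) * m (i+1, j+1) - m (i, j+1) * m (i+1, j))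
      - m (i-1, j) * (m (i, j-1) * m (i+1, j+1) - m (i, j+1) * m (i+1, j-1))
      + m (i-1, j+1) * (m (i, j-1) * m (i+1, j) - m (i, j) * m (i+1, j-1)) := by
  simp only [nbhdDet, Matrix.det_fin_three, Matrix.of_apply, Fin.val_zero, Fin.val_one,
    Fin.val_two, Nat.cast_zero, Nat.cast_one, Nat.cast_ofNat]
  ring_nf

namespace IsSL2Tiling

variable {R : Type*} [CommRing R] {m : ℤ × ℤ → R}

/-- Desnanot–Jacobi: `m (i, j) * nbhdDet m i j` is the 2×2 determinant of the four corner 2×2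
minors of the block, which are all `1`. -/
lemma mul_nbhdDet_eq_zero (hm : IsSL2Tiling m) (i j : ℤ) : m (i, j) * nbhdDet m i j = 0 := by
  have h1 := hm (i-1) (j-1)
  have h2 := hm (i-1) j
  have h3 := hm i (j-1)
  simp only [sub_add_cancel] at h1 h2 h3
  rw [nbhdDet_eq]
  linear_combination (m (i, j) * m (i+1, j+1) - m (i, j+1) * m (i+1, j)) * h1
    - (m (i, j-1) * m (i+1, j) - m (i, j) * m (i+1, j-1)) * h2 + hm i j - h3

lemma eq_zero_of_isWild [NoZeroDivisors R] (hm : IsSL2Tiling m) {i j : ℤ}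
    (hw : IsWild m i j) : m (i, j) = 0 :=
  (mul_eq_zero.mp (hm.mul_nbhdDet_eq_zero i j)).resolve_right hw

lemma add_ne_zero_of_eq_zero [Nontrivial R] (hm : IsSL2Tiling m) {p e : ℤ × ℤ}
    (hp : m p = 0) (he : e ∈ unitSteps) : m (p + e) ≠ 0 := by
  obtain ⟨i, j⟩ := p
  intro hpe
  simp only [unitSteps, mem_insert, mem_singleton] at he
  rcases he with rfl | rfl | rfl | rfl <;>
    simp only [Prod.mk_add_mk, add_zero, ← sub_eq_add_neg] at hpe
  · simpa [hp, hpe] using hm i j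
  · simpa [hp, hpe] using hm (i - 1) j
  · simpa [hp, hpe] using hm i j
  · simpa [hp, hpe] using hm i (j - 1)

end IsSL2Tiling

lemma exists_mem_diagSteps_ne_zero_of_isWild {R : Type*} [CommRing R] {m : ℤ × ℤ → R}
    {p : ℤ × ℤ} (hw : IsWild m p.1 p.2) (hp : m p = 0) : ∃ d ∈ diagSteps, m (p + d) ≠ 0 := by
  obtain ⟨i, j⟩ := p
  by_contra! h
  simp only [diagSteps, mem_insert, mem_singleton, forall_eq_or_imp, forall_eq] at h
  obtain ⟨h₁, h₂, h₃, h₄⟩ := h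
  apply hw
  rw [nbhdDet_eq]
  simp only [Prod.mk_add_mk, ← sub_eq_add_neg] at h₁ h₂ h₃ h₄
  rw [hp, h₁, h₂, h₃, h₄]
  ring

namespace PentagonPacking

/-- `(u, v) ∈ cellPieces` indexes the triangle with vertices `c`, `c + u/2`, `c + (u + v)/2` of the
unit square centred at a cell `c`; these eight triangles tile that square. -/
def cellPieces : Finset ((ℤ × ℤ) × (ℤ × ℤ)) :=
  (unitSteps ×ˢ unitSteps).filter fun uv => uv.1.1 * uv.2.1 + uv.1.2 * uv.2.2 = 0

/-- The triangle `(c, u, v)` lies in the unit square with corners `c`, `c + u`, `c + v`,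
`c + u + v`; the cell `w` with hole `w + d` claims it if `w` is `c` or `c + u`, or if `w + d` is
the corner opposite to `w`. -/
def Claims (w d c u v : ℤ × ℤ) : Prop :=
  c = w ∨ c + u = w ∨ (c + u + v = w ∧ w + d = c) ∨ (c + v = w ∧ w + d = c + u)

instance (w d c u v : ℤ × ℤ) : Decidable (Claims w d c u v) :=
  inferInstanceAs (Decidable (_ ∨ _))

noncomputable def nbhd (w : ℤ × ℤ) : Finset (ℤ × ℤ) :=
  Icc (w.1 - 1) (w.1 + 1) ×ˢ Icc (w.2 - 1) (w.2 + 1)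

noncomputable def pentagon (w d : ℤ × ℤ) : Finset ((ℤ × ℤ) × (ℤ × ℤ) × (ℤ × ℤ)) :=
  (nbhd w ×ˢ cellPieces).filter fun p => Claims w d p.1 p.2.1 p.2.2

lemma card_cellPieces : #cellPieces = 8 := by decide

lemma mem_unitSteps_of_mem_cellPieces {u v : ℤ × ℤ} (h : (u, v) ∈ cellPieces) :
    u ∈ unitSteps ∧ v ∈ unitSteps := by
  simpa [cellPieces] using (mem_filter.mp h).1

lemma mem_pentagon {w d : ℤ × ℤ} {p : (ℤ × ℤ) × (ℤ × ℤ) × (ℤ × ℤ)} :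
    p ∈ pentagon w d ↔ p.2 ∈ cellPieces ∧ Claims w d p.1 p.2.1 p.2.2 := by
  obtain ⟨c, u, v⟩ := p
  simp only [pentagon, nbhd, mem_filter, mem_product, mem_Icc]
  refine ⟨fun h => ⟨h.1.2, h.2⟩, fun ⟨huv, h⟩ => ⟨⟨?_, huv⟩, h⟩⟩
  simp only [cellPieces, unitSteps, mem_filter, mem_product, mem_insert, mem_singleton] at huv
  obtain ⟨⟨hu | hu | hu | hu, hv | hv | hv | hv⟩, hperp⟩ := huv <;> subst hu hv <;>
    simp only [Claims, Prod.ext_iff, Prod.fst_add, Prod.snd_add] at h hperp <;> omega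

lemma claims_add_iff (w d c u v x : ℤ × ℤ) :
    Claims (w + x) d (c + x) u v ↔ Claims w d c u v := by
  simp only [Claims, add_right_comm _ x, add_left_inj]

lemma card_pentagon (w : ℤ × ℤ) {d : ℤ × ℤ} (hd : d ∈ diagSteps) : #(pentagon w d) = 20 := by
  have h₀ : ∀ d ∈ diagSteps, #(pentagon 0 d) = 20 := by decide
  rw [← h₀ d hd]
  refine card_nbij' (fun p => (p.1 - w, p.2)) (fun p => (p.1 + w, p.2)) ?_ ?_ ?_ ?_
  · intro p hp
    simp only [mem_coe, mem_pentagon] at hp ⊢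
    exact ⟨hp.1, (claims_add_iff 0 d _ _ _ w).mp (by simpa using hp.2)⟩
  · intro p hp
    simp only [mem_coe, mem_pentagon] at hp ⊢
    exact ⟨hp.1, by simpa using (claims_add_iff 0 d _ _ _ w).mpr hp.2⟩
  · intro p _
    simp
  · intro p _
    simp

lemma eq_of_claims {W : Finset (ℤ × ℤ)} {d : ℤ × ℤ → ℤ × ℤ}
    (hadj : ∀ w ∈ W, ∀ e ∈ unitSteps, w + e ∉ W) (hhole : ∀ w ∈ W, w + d w ∉ W)
    {w w' c u v : ℤ × ℤ} (hw : w ∈ W) (hw' : w' ∈ W) (hu : u ∈ unitSteps) (hv : v ∈ unitSteps)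
    (h : Claims w (d w) c u v) (h' : Claims w' (d w') c u v) : w = w' := by
  rcases h with rfl | rfl | ⟨rfl, hd⟩ | ⟨rfl, hd⟩ <;>
    rcases h' with h' | h' | ⟨h', hd'⟩ | ⟨h', hd'⟩ <;> subst h'
  -- two distinct corners of a unit square are either adjacent or opposite, and in the latter
  -- case one of them is the hole of the other
  all_goals first
    | rfl
    | exact (hhole _ hw (by rwa [hd])).elim
    | exact (hhole _ hw' (by rwa [hd'])).elim
    | exact (hadj _ hw _ hu hw').elim
    | exact (hadj _ hw' _ hu hw).elim
    | exact (hadj _ hw _ hv hw').elim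
    | exact (hadj _ hw' _ hv hw).elim
    | exact (hadj _ hw _ hu (add_right_comm c u v ▸ hw')).elim
    | exact (hadj _ hw' _ hu (add_right_comm c u v ▸ hw)).elim

theorem five_mul_card_le_two_mul_card {W R : Finset (ℤ × ℤ)}
    (hadj : ∀ w ∈ W, ∀ e ∈ unitSteps, w + e ∉ W)
    (hhole : ∀ w ∈ W, ∃ d ∈ diagSteps, w + d ∉ W)
    (hR : ∀ w ∈ W, nbhd w ⊆ R) :
    5 * #W ≤ 2 * #R := by
  choose! d hd hdW using hhole
  have hdisj : (W : Set (ℤ × ℤ)).PairwiseDisjoint fun w => pentagon w (d w) := by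
    intro w hw w' hw' hne
    refine disjoint_left.mpr fun p hp hp' => hne ?_
    rw [mem_pentagon] at hp hp'
    obtain ⟨hu, hv⟩ := mem_unitSteps_of_mem_cellPieces hp.1
    exact eq_of_claims hadj hdW hw hw' hu hv hp.2 hp'.2
  have hsub : W.biUnion (fun w => pentagon w (d w)) ⊆ R ×ˢ cellPieces := by
    intro p hp
    obtain ⟨w, hw, hp⟩ := mem_biUnion.mp hp
    obtain ⟨hp, -⟩ := mem_filter.mp hp
    exact product_subset_product_left (hR w hw) hp
  have := card_le_card hsub
  rw [card_biUnion hdisj, sum_congr rfl fun w hw => card_pentagon w (hd w hw), sum_const,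
    smul_eq_mul, card_product, card_cellPieces] at this
  omega

end PentagonPacking

theorem wild_count_in_square_le_general (m : ℤ × ℤ → ℤ) (hm : IsSL2Tiling m)
    (n : ℕ) :
    (Set.ncard {p : ℤ × ℤ | 0 ≤ p.1 ∧ p.1 < n ∧ 0 ≤ p.2 ∧ p.2 < n ∧ IsWild m p.1 p.2} : ℝ) ≤
      2 * (n + 2) ^ 2 / 5 := by
  classical
  set W := (Ico (0 : ℤ) n ×ˢ Ico (0 : ℤ) n).filter fun p => IsWild m p.1 p.2
  have hW : {p : ℤ × ℤ | 0 ≤ p.1 ∧ p.1 < n ∧ 0 ≤ p.2 ∧ p.2 < n ∧ IsWild m p.1 p.2} = W := by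
    ext p
    simp [W, and_assoc]
  have hzero : ∀ w ∈ W, m w = 0 := fun w hw => hm.eq_zero_of_isWild (mem_filter.mp hw).2
  have hcount : 5 * #W ≤ 2 * #(Icc (-1 : ℤ) n ×ˢ Icc (-1 : ℤ) n) := by
    refine PentagonPacking.five_mul_card_le_two_mul_card ?_ ?_ ?_
    · exact fun w hw e he hwe => hm.add_ne_zero_of_eq_zero (hzero w hw) he (hzero _ hwe)
    · intro w hw
      obtain ⟨d, hd, hne⟩ :=
        exists_mem_diagSteps_ne_zero_of_isWild (mem_filter.mp hw).2 (hzero w hw)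
      exact ⟨d, hd, fun h => hne (hzero _ h)⟩
    · intro w hw
      simp only [W, mem_filter, mem_product, mem_Ico] at hw
      exact product_subset_product (Icc_subset_Icc (by omega) (by omega))
        (Icc_subset_Icc (by omega) (by omega))
  rw [card_product, Int.card_Icc, show ((n : ℤ) + 1 - -1).toNat = n + 2 by omega] at hcount
  rw [hW, Set.ncard_coe_finset, le_div_iff₀ (by norm_num)]
  exact_mod_cast (by linarith : #W * 5 ≤ 2 * (n + 2) ^ 2)

theorem wild_count_in_square_le (m : ℤ × ℤ → ℤ) (hm : IsSL2Tiling m)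
    (n : ℕ) (hn : 0 < n) :
    (Set.ncard {p : ℤ × ℤ | 0 ≤ p.1 ∧ p.1 < n ∧ 0 ≤ p.2 ∧ p.2 < n ∧ IsWild m p.1 p.2} : ℝ) ≤
      2 * (n + 2) ^ 2 / 5 :=
  wild_count_in_square_le_general m hm n
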